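/- arXiv:1806.09710 — 3 statements merged into one kernel-verified Lean document; each statement's English description precedes it below -/
import Mathlib

section
/- Let k ≥ 1 and ρ ≥ 2 be natural numbers and let p', q' : Fin (k·ρ) → ℝ be positive vectors. Define the block-aggregated vectors p, q : Fin k → ℝ by p_r = Σ_{i=0}^{ρ-1} p'_{rρ+i} and q_r = Σ_{i=0}^{ρ-1} q'_{rρ+i}. Suppose there exists a block r and indices i, j ∈ {0, ..., ρ-1} such that p'_{rρ+i} · q'_{rρ+j} ≠ p'_{rρ+j} · q'_{rρ+i}. Then for every λ ∈ (0,1), Σ_{r=0}^{k-1} p_r^{1-λ} q_r^{λ} > Σ_{j=0}^{kρ-1} p'_j^{1-λ} q'_j^{λ}. -/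
/-!
Hölder's inequality with exponents `1/(1-λ)` and `1/λ` gives
`∑ aᵢ^(1-λ) bᵢ^λ ≤ (∑ aᵢ)^(1-λ) (∑ bᵢ)^λ` for nonnegative `a, b`, so merging the cells of a
block never decreases the sum. For the non-proportional block the inequality is strict: with
`A = ∑ aᵢ` and `B = ∑ bᵢ`, weighted AM-GM bounds `(aᵢ/A)^(1-λ) (bᵢ/B)^λ` by
`(1-λ) aᵢ/A + λ bᵢ/B`, these bounds sum to `1`, and AM-GM is strict at any index with
`aᵢ/A ≠ bᵢ/B`, which exists as soon as `a` and `b` are not proportional.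
-/

/-- The index `r*ρ + i` of the `i`-th fine quantizer cell inside the `r`-th coarse
block, as an element of `Fin (k * ρ)`. -/
def blockIdx {k ρ : ℕ} (r : Fin k) (i : Fin ρ) : Fin (k * ρ) :=
  ⟨r.val * ρ + i.val, by
    have h1 : r.val * ρ + i.val < (r.val + 1) * ρ := by
      rw [Nat.succ_mul]; exact Nat.add_lt_add_left i.isLt _
    exact lt_of_lt_of_le h1 (Nat.mul_le_mul_right ρ r.isLt)⟩

open Finset Real

section Holder

variable {ι : Type*} [Fintype ι] {a b : ι → ℝ} {l : ℝ}

theorem sum_rpow_mul_rpow_le (ha : ∀ i, 0 ≤ a i) (hb : ∀ i, 0 ≤ b i) (hl₀ : 0 < l)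
    (hl₁ : l < 1) :
    ∑ i, a i ^ (1 - l) * b i ^ l ≤ (∑ i, a i) ^ (1 - l) * (∑ i, b i) ^ l := by
  have holder := inner_le_Lp_mul_Lq_of_nonneg univ (HolderConjugate.one_sub_inv_inv hl₀ hl₁)
    (f := fun i => a i ^ (1 - l)) (g := fun i => b i ^ l)
    (fun i _ => rpow_nonneg (ha i) _) (fun i _ => rpow_nonneg (hb i) _)
  simpa only [one_div, inv_inv, rpow_rpow_inv (ha _) (sub_pos.2 hl₁).ne',
    rpow_rpow_inv (hb _) hl₀.ne'] using holder

lemma rpow_mul_rpow_eq_scaled {x y A B : ℝ} (hx : 0 ≤ x) (hy : 0 ≤ y) (hA : 0 < A)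
    (hB : 0 < B) :
    x ^ (1 - l) * y ^ l = A ^ (1 - l) * B ^ l * ((x / A) ^ (1 - l) * (y / B) ^ l) := by
  rw [div_rpow hx hA.le, div_rpow hy hB.le]
  field_simp

lemma rpow_mul_rpow_le_scaled {x y A B : ℝ} (hx : 0 ≤ x) (hy : 0 ≤ y) (hA : 0 < A) (hB : 0 < B)
    (hl₀ : 0 ≤ l) (hl₁ : l ≤ 1) :
    x ^ (1 - l) * y ^ l ≤ A ^ (1 - l) * B ^ l * ((1 - l) * (x / A) + l * (y / B)) := by
  rw [rpow_mul_rpow_eq_scaled hx hy hA hB]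
  gcongr
  exact geom_mean_le_arith_mean2_weighted (sub_nonneg.2 hl₁) hl₀ (by positivity) (by positivity)
    (sub_add_cancel 1 l)

lemma rpow_mul_rpow_lt_scaled {x y A B : ℝ} (hx : 0 ≤ x) (hy : 0 ≤ y) (hA : 0 < A) (hB : 0 < B)
    (hl₀ : 0 < l) (hl₁ : l < 1) (hxy : x / A ≠ y / B) :
    x ^ (1 - l) * y ^ l < A ^ (1 - l) * B ^ l * ((1 - l) * (x / A) + l * (y / B)) := by
  rw [rpow_mul_rpow_eq_scaled hx hy hA hB]
  gcongr
  exact (geom_mean_lt_arith_mean2_weighted_iff_of_pos (sub_pos.2 hl₁) hl₀ (by positivity)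
    (by positivity) (sub_add_cancel 1 l)).2 hxy

lemma mul_eq_mul_of_div_sum_eq_div_sum (hA : ∑ m, a m ≠ 0)
    (h : ∀ m, a m / ∑ n, a n = b m / ∑ n, b n) (i j : ι) : a i * b j = a j * b i := by
  have hprop : ∀ m, a m = (∑ n, a n) / (∑ n, b n) * b m := fun m => by
    rw [div_mul_comm, ← h, div_mul_cancel₀ _ hA]
  rw [hprop i, hprop j]
  ring

theorem sum_rpow_mul_rpow_lt (ha : ∀ i, 0 ≤ a i) (hb : ∀ i, 0 ≤ b i) (hl₀ : 0 < l) (hl₁ : l < 1)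
    (hab : ∃ i j, a i * b j ≠ a j * b i) :
    ∑ i, a i ^ (1 - l) * b i ^ l < (∑ i, a i) ^ (1 - l) * (∑ i, b i) ^ l := by
  obtain ⟨i, j, hij⟩ := hab
  have hA : 0 < ∑ n, a n := Fintype.sum_pos <| lt_of_le_of_ne ha <| by rintro rfl; simp at hij
  have hB : 0 < ∑ n, b n := Fintype.sum_pos <| lt_of_le_of_ne hb <| by rintro rfl; simp at hij
  obtain ⟨m, hm⟩ : ∃ m, a m / ∑ n, a n ≠ b m / ∑ n, b n := by
    by_contra! h
    exact hij (mul_eq_mul_of_div_sum_eq_div_sum hA.ne' h i j)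
  set A := ∑ n, a n
  set B := ∑ n, b n
  have hweights : ∑ n, ((1 - l) * (a n / A) + l * (b n / B)) = 1 := by
    rw [sum_add_distrib, ← mul_sum, ← mul_sum, ← sum_div, ← sum_div, div_self hA.ne',
      div_self hB.ne']
    ring
  calc ∑ n, a n ^ (1 - l) * b n ^ l
      < ∑ n, A ^ (1 - l) * B ^ l * ((1 - l) * (a n / A) + l * (b n / B)) :=
        sum_lt_sum (fun n _ => rpow_mul_rpow_le_scaled (ha n) (hb n) hA hB hl₀.le hl₁.le)
          ⟨m, mem_univ _, rpow_mul_rpow_lt_scaled (ha m) (hb m) hA hB hl₀ hl₁ hm⟩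
    _ = A ^ (1 - l) * B ^ l := by rw [← mul_sum, hweights, mul_one]

end Holder

lemma blockIdx_eq_finProdFinEquiv {k ρ : ℕ} (r : Fin k) (i : Fin ρ) :
    blockIdx r i = finProdFinEquiv (r, i) := by
  ext
  simp only [blockIdx, finProdFinEquiv_apply_val]
  ring

lemma sum_eq_sum_sum_blockIdx {M : Type*} [AddCommMonoid M] {k ρ : ℕ} (f : Fin (k * ρ) → M) :
    ∑ j, f j = ∑ r, ∑ i, f (blockIdx r i) := by
  simp only [blockIdx_eq_finProdFinEquiv, ← Fintype.sum_prod_type', Equiv.sum_comp]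

theorem block_aggregation_chernoff_sum_gt_general
    (k ρ : ℕ)
    (p' q' : Fin (k * ρ) → ℝ)
    (hp' : ∀ j, 0 < p' j) (hq' : ∀ j, 0 < q' j)
    (p q : Fin k → ℝ)
    (hp : ∀ r, p r = ∑ i : Fin ρ, p' (blockIdx r i))
    (hq : ∀ r, q r = ∑ i : Fin ρ, q' (blockIdx r i))
    (hlearn : ∃ (r : Fin k) (i j : Fin ρ),
        p' (blockIdx r i) * q' (blockIdx r j) ≠ p' (blockIdx r j) * q' (blockIdx r i))
    (l : ℝ) (hl : l ∈ Set.Ioo (0 : ℝ) 1) :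
    ∑ r, p r ^ (1 - l) * q r ^ l > ∑ j, p' j ^ (1 - l) * q' j ^ l := by
  obtain ⟨r₀, hr₀⟩ := hlearn
  rw [gt_iff_lt, sum_eq_sum_sum_blockIdx (fun j => p' j ^ (1 - l) * q' j ^ l)]
  refine sum_lt_sum (fun r _ => ?_) ⟨r₀, mem_univ _, ?_⟩ <;> rw [hp, hq]
  · exact sum_rpow_mul_rpow_le (fun i => (hp' _).le) (fun i => (hq' _).le) hl.1 hl.2
  · exact sum_rpow_mul_rpow_lt (fun i => (hp' _).le) (fun i => (hq' _).le) hl.1 hl.2 hr₀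

/-- If within some block the fine cells are not proportional (the classification
task is learnable), merging `ρ ≥ 2` consecutive quantizer cells strictly decreases
the Chernoff-type sum: for every `λ ∈ (0,1)`,
`∑ r, p r ^ (1-λ) * q r ^ λ > ∑ j, p' j ^ (1-λ) * q' j ^ λ`. -/
theorem block_aggregation_chernoff_sum_gt
    (k ρ : ℕ) (hk : 1 ≤ k) (hρ : 2 ≤ ρ)
    (p' q' : Fin (k * ρ) → ℝ)
    (hp' : ∀ j, 0 < p' j) (hq' : ∀ j, 0 < q' j)
    (p q : Fin k → ℝ)
    (hp : ∀ r, p r = ∑ i : Fin ρ, p' (blockIdx r i))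
    (hq : ∀ r, q r = ∑ i : Fin ρ, q' (blockIdx r i))
    (hlearn : ∃ (r : Fin k) (i j : Fin ρ),
        p' (blockIdx r i) * q' (blockIdx r j) ≠ p' (blockIdx r j) * q' (blockIdx r i))
    (l : ℝ) (hl : l ∈ Set.Ioo (0 : ℝ) 1) :
    ∑ r, p r ^ (1 - l) * q r ^ l > ∑ j, p' j ^ (1 - l) * q' j ^ l :=
  block_aggregation_chernoff_sum_gt_general k ρ p' q' hp' hq' p q hp hq hlearn l hl
end

section
/- Let ι' and ι be finite index types, φ : ι' → ι any function, and p', q' : ι' → ℝ positive vectors. Define p, q : ι → ℝ by p_r = Σ_{i : φ(i) = r} p'_i and q_r = Σ_{i : φ(i) = r} q'_i. Then for every λ ∈ (0,1), Σ_{r∈ι} p_r^{1-λ} q_r^{λ} ≥ Σ_{i∈ι'} p'_i^{1-λ} q'_i^{λ}. -/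
open Finset Real

/-- Hölder's inequality with the conjugate exponents `1 / (1 - l)` and `1 / l`. -/
theorem Real.sum_rpow_one_sub_mul_rpow_le {ι : Type*} (s : Finset ι) {f g : ι → ℝ}
    (hf : ∀ i ∈ s, 0 ≤ f i) (hg : ∀ i ∈ s, 0 ≤ g i) {l : ℝ} (hl₀ : 0 < l) (hl₁ : l < 1) :
    ∑ i ∈ s, f i ^ (1 - l) * g i ^ l ≤ (∑ i ∈ s, f i) ^ (1 - l) * (∑ i ∈ s, g i) ^ l := by
  have hl₁' : 0 < 1 - l := sub_pos.mpr hl₁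
  calc ∑ i ∈ s, f i ^ (1 - l) * g i ^ l
      ≤ (∑ i ∈ s, (f i ^ (1 - l)) ^ (1 - l)⁻¹) ^ (1 / (1 - l)⁻¹)
          * (∑ i ∈ s, (g i ^ l) ^ l⁻¹) ^ (1 / l⁻¹) :=
        inner_le_Lp_mul_Lq_of_nonneg s (HolderConjugate.one_sub_inv_inv hl₀ hl₁)
          (fun i hi => rpow_nonneg (hf i hi) _) (fun i hi => rpow_nonneg (hg i hi) _)
    _ = (∑ i ∈ s, f i) ^ (1 - l) * (∑ i ∈ s, g i) ^ l := by
        rw [sum_congr rfl fun i hi => rpow_rpow_inv (hf i hi) hl₁'.ne',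
          sum_congr rfl fun i hi => rpow_rpow_inv (hg i hi) hl₀.ne',
          one_div, inv_inv, one_div, inv_inv]

/-- Arbitrary deterministic merging of cells via a map `φ : ι' → ι` cannot
increase the Chernoff-type sum: with the pushforwards
`p r = ∑_{i : φ i = r} p' i` and `q r = ∑_{i : φ i = r} q' i`, for every
`λ ∈ (0,1)`, `∑ r, p r ^ (1-λ) * q r ^ λ ≥ ∑ i, p' i ^ (1-λ) * q' i ^ λ`. -/
theorem pushforward_chernoff_sum_ge
    (ι' ι : Type*) [Fintype ι'] [Fintype ι] [DecidableEq ι]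
    (φ : ι' → ι)
    (p' q' : ι' → ℝ) (hp' : ∀ i, 0 < p' i) (hq' : ∀ i, 0 < q' i)
    (p q : ι → ℝ)
    (hp : ∀ r, p r = ∑ i ∈ Finset.univ.filter (fun i => φ i = r), p' i)
    (hq : ∀ r, q r = ∑ i ∈ Finset.univ.filter (fun i => φ i = r), q' i)
    (l : ℝ) (hl : l ∈ Set.Ioo (0 : ℝ) 1) :
    ∑ r, p r ^ (1 - l) * q r ^ l ≥ ∑ i, p' i ^ (1 - l) * q' i ^ l := by
  rw [← sum_fiberwise univ φ]
  refine sum_le_sum fun r _ => ?_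
  rw [hp, hq]
  exact sum_rpow_one_sub_mul_rpow_le _ (fun i _ => (hp' i).le) (fun i _ => (hq' i).le) hl.1 hl.2
end

section
/- Let k ≥ 1, ρ ≥ 2 and m ≥ 1 be natural numbers. Let p', q' : Fin (k·ρ) → ℝ be positive probability vectors (the class-conditional distributions of the fine quantizer output U') and let a, b : Fin m → ℝ be positive probability vectors (the class-conditional distributions of the human's observation X₂, conditionally independent of the quantizer output given the class). Define block-aggregated probability vectors p, q : Fin k → ℝ by p_r = Σ_{i=0}^{ρ-1} p'_{rρ+i}, q_r = Σ_{i=0}^{ρ-1} q'_{rρ+i}, and joint vectors P'(j,x) = p'_j · a_x, Q'(j,x) = q'_j · b_x on Fin (k·ρ) × Fin m, and P(r,x) = p_r · a_x, Q(r,x) = q_r · b_x on Fin k × Fin m. Suppose there exists a block r and indices i, j ∈ {0, ..., ρ-1} with p'_{rρ+i} · q'_{rρ+j} ≠ p'_{rρ+j} · q'_{rρ+i}. Then C(P‖Q) < C(P'‖Q'), i.e. the Chernoff information between the joint class-conditional distributions at the fusion node is strictly larger for the finer (k' = kρ)-level quantizer than for the coarser k-level quantizer. -/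
/-- The Chernoff information `C(p‖q) = -log (inf_{λ ∈ (0,1)} ∑ i, p i^{1-λ} q i^λ)`
between two positive probability vectors on a finite index type. -/
noncomputable def chernoffInfo {ι : Type*} [Fintype ι] (p q : ι → ℝ) : ℝ :=
  -Real.log (sInf ((fun l : ℝ => ∑ i, p i ^ (1 - l) * q i ^ l) '' Set.Ioo (0 : ℝ) 1))

section Aux

open Real Finset

lemma amgm_le' {x y w : ℝ} (hx : 0 ≤ x) (hy : 0 ≤ y) (hw0 : 0 ≤ w) (hw1 : w ≤ 1) :
    x ^ (1 - w) * y ^ w ≤ (1 - w) * x + w * y :=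
  Real.geom_mean_le_arith_mean2_weighted (by linarith) hw0 hx hy (by ring)

lemma amgm_lt' {x y w : ℝ} (hx : 0 < x) (hy : 0 < y) (hxy : x ≠ y)
    (hw0 : 0 < w) (hw1 : w < 1) :
    x ^ (1 - w) * y ^ w < (1 - w) * x + w * y := by
  have hcc := strictConcaveOn_log_Ioi.2 (Set.mem_Ioi.2 hx) (Set.mem_Ioi.2 hy) hxy
      (by linarith : (0:ℝ) < 1 - w) hw0 (by ring)
  simp only [smul_eq_mul] at hcc
  have h1 : x ^ (1 - w) * y ^ w = Real.exp ((1 - w) * Real.log x + w * Real.log y) := by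
    rw [Real.rpow_def_of_pos hx, Real.rpow_def_of_pos hy, ← Real.exp_add]; ring_nf
  have hpos : 0 < (1 - w) * x + w * y :=
    add_pos (mul_pos (by linarith) hx) (mul_pos hw0 hy)
  have h2 : (1 - w) * x + w * y = Real.exp (Real.log ((1 - w) * x + w * y)) := by
    rw [Real.exp_log hpos]
  rw [h1, h2]
  exact Real.exp_lt_exp.2 hcc

lemma min_le_rpow_mix {x y w : ℝ} (hx : 0 < x) (hy : 0 < y) (hw0 : 0 ≤ w) (hw1 : w ≤ 1) :
    min x y ≤ x ^ (1 - w) * y ^ w := by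
  have hm : 0 < min x y := lt_min hx hy
  calc min x y = min x y ^ (1 - w) * min x y ^ w := by
        rw [← Real.rpow_add hm, show (1 - w) + w = 1 by ring, Real.rpow_one]
    _ ≤ x ^ (1 - w) * y ^ w :=
        mul_le_mul (Real.rpow_le_rpow hm.le (min_le_left _ _) (by linarith))
          (Real.rpow_le_rpow hm.le (min_le_right _ _) hw0) (by positivity) (by positivity)

lemma blockIdx_bijective {k ρ : ℕ} (hρ : 0 < ρ) :
    Function.Bijective (fun z : Fin k × Fin ρ => blockIdx z.1 z.2) := by
  refine (Fintype.bijective_iff_injective_and_card _).2 ⟨?_, by simp⟩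
  rintro ⟨r1, i1⟩ ⟨r2, i2⟩ h
  have h' : r1.val * ρ + i1.val = r2.val * ρ + i2.val := congrArg Fin.val h
  have e1 : i1.val = i2.val := by
    have g1 : (r1.val * ρ + i1.val) % ρ = i1.val := by
      rw [Nat.add_comm, Nat.add_mul_mod_self_right, Nat.mod_eq_of_lt i1.isLt]
    have g2 : (r2.val * ρ + i2.val) % ρ = i2.val := by
      rw [Nat.add_comm, Nat.add_mul_mod_self_right, Nat.mod_eq_of_lt i2.isLt]
    rw [← g1, ← g2, h']
  have e2 : r1.val = r2.val := by
    have h'' : r1.val * ρ = r2.val * ρ := by omega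
    exact Nat.eq_of_mul_eq_mul_right hρ h''
  simp [Prod.ext_iff, Fin.ext_iff, e1, e2]

lemma sum_blocks {k ρ : ℕ} (hρ : 0 < ρ) (g : Fin (k * ρ) → ℝ) :
    ∑ j, g j = ∑ r : Fin k, ∑ i : Fin ρ, g (blockIdx r i) := by
  have hb := Fintype.sum_bijective _ (blockIdx_bijective (k := k) hρ)
    (fun z : Fin k × Fin ρ => g (blockIdx z.1 z.2)) g (fun z => rfl)
  rw [← hb]
  exact Fintype.sum_prod_type _

lemma block_sum_le {ρ : ℕ} (hρ : 0 < ρ) (u v : Fin ρ → ℝ)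
    (hu : ∀ i, 0 < u i) (hv : ∀ i, 0 < v i) {w : ℝ} (hw0 : 0 < w) (hw1 : w < 1) :
    ∑ i, u i ^ (1 - w) * v i ^ w ≤ (∑ i, u i) ^ (1 - w) * (∑ i, v i) ^ w := by
  have hne : (Finset.univ : Finset (Fin ρ)).Nonempty := ⟨⟨0, hρ⟩, mem_univ _⟩
  have hU : 0 < ∑ i, u i := Finset.sum_pos (fun i _ => hu i) hne
  have hV : 0 < ∑ i, v i := Finset.sum_pos (fun i _ => hv i) hne
  set U := ∑ i, u i with hUdef
  set V := ∑ i, v i with hVdef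
  have key : ∀ i, u i ^ (1 - w) * v i ^ w
      = (U ^ (1 - w) * V ^ w) * ((u i / U) ^ (1 - w) * (v i / V) ^ w) := by
    intro i
    rw [Real.div_rpow (hu i).le hU.le, Real.div_rpow (hv i).le hV.le]
    have h1 : (U : ℝ) ^ (1 - w) ≠ 0 := (Real.rpow_pos_of_pos hU _).ne'
    have h2 : (V : ℝ) ^ w ≠ 0 := (Real.rpow_pos_of_pos hV _).ne'
    field_simp
  calc ∑ i, u i ^ (1 - w) * v i ^ w
      = (U ^ (1 - w) * V ^ w) * ∑ i, (u i / U) ^ (1 - w) * (v i / V) ^ w := by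
        rw [Finset.mul_sum]; exact Finset.sum_congr rfl fun i _ => key i
    _ ≤ (U ^ (1 - w) * V ^ w) * 1 := by
        refine mul_le_mul_of_nonneg_left ?_
          (mul_pos (Real.rpow_pos_of_pos hU _) (Real.rpow_pos_of_pos hV _)).le
        calc ∑ i, (u i / U) ^ (1 - w) * (v i / V) ^ w
            ≤ ∑ i, ((1 - w) * (u i / U) + w * (v i / V)) :=
              Finset.sum_le_sum fun i _ =>
                amgm_le' (div_pos (hu i) hU).le (div_pos (hv i) hV).le hw0.le hw1.le
          _ = 1 := by
              rw [Finset.sum_add_distrib, ← Finset.mul_sum, ← Finset.mul_sum,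
                ← Finset.sum_div, ← Finset.sum_div, ← hUdef, ← hVdef,
                div_self hU.ne', div_self hV.ne']
              ring
    _ = U ^ (1 - w) * V ^ w := mul_one _

lemma block_sum_lt {ρ : ℕ} (hρ : 0 < ρ) (u v : Fin ρ → ℝ)
    (hu : ∀ i, 0 < u i) (hv : ∀ i, 0 < v i) {w : ℝ} (hw0 : 0 < w) (hw1 : w < 1)
    (hne' : ∃ i j, u i * v j ≠ u j * v i) :
    ∑ i, u i ^ (1 - w) * v i ^ w < (∑ i, u i) ^ (1 - w) * (∑ i, v i) ^ w := by
  have hne : (Finset.univ : Finset (Fin ρ)).Nonempty := ⟨⟨0, hρ⟩, mem_univ _⟩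
  have hU : 0 < ∑ i, u i := Finset.sum_pos (fun i _ => hu i) hne
  have hV : 0 < ∑ i, v i := Finset.sum_pos (fun i _ => hv i) hne
  set U := ∑ i, u i with hUdef
  set V := ∑ i, v i with hVdef
  have key : ∀ i, u i ^ (1 - w) * v i ^ w
      = (U ^ (1 - w) * V ^ w) * ((u i / U) ^ (1 - w) * (v i / V) ^ w) := by
    intro i
    rw [Real.div_rpow (hu i).le hU.le, Real.div_rpow (hv i).le hV.le]
    have h1 : (U : ℝ) ^ (1 - w) ≠ 0 := (Real.rpow_pos_of_pos hU _).ne'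
    have h2 : (V : ℝ) ^ w ≠ 0 := (Real.rpow_pos_of_pos hV _).ne'
    field_simp
  -- find an index where the ratios differ
  have hex : ∃ i0, u i0 / U ≠ v i0 / V := by
    by_contra hcon
    push_neg at hcon
    obtain ⟨i, j, hij⟩ := hne'
    apply hij
    have hi' : u i * V = v i * U := (div_eq_div_iff hU.ne' hV.ne').1 (hcon i)
    have hj' : u j * V = v j * U := (div_eq_div_iff hU.ne' hV.ne').1 (hcon j)
    have hkey : u i * v j * V = u j * v i * V := by
      calc u i * v j * V = (u i * V) * v j := by ring
        _ = (v i * U) * v j := by rw [hi']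
        _ = (v j * U) * v i := by ring
        _ = (u j * V) * v i := by rw [hj']
        _ = u j * v i * V := by ring
    exact mul_right_cancel₀ hV.ne' hkey
  obtain ⟨i0, hi0⟩ := hex
  calc ∑ i, u i ^ (1 - w) * v i ^ w
      = (U ^ (1 - w) * V ^ w) * ∑ i, (u i / U) ^ (1 - w) * (v i / V) ^ w := by
        rw [Finset.mul_sum]; exact Finset.sum_congr rfl fun i _ => key i
    _ < (U ^ (1 - w) * V ^ w) * 1 := by
        refine mul_lt_mul_of_pos_left ?_
          (mul_pos (Real.rpow_pos_of_pos hU _) (Real.rpow_pos_of_pos hV _))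
        calc ∑ i, (u i / U) ^ (1 - w) * (v i / V) ^ w
            < ∑ i, ((1 - w) * (u i / U) + w * (v i / V)) := by
              refine Finset.sum_lt_sum
                (fun i _ => amgm_le' (div_pos (hu i) hU).le (div_pos (hv i) hV).le hw0.le hw1.le)
                ⟨i0, mem_univ _, amgm_lt' (div_pos (hu i0) hU) (div_pos (hv i0) hV) hi0 hw0 hw1⟩
          _ = 1 := by
              rw [Finset.sum_add_distrib, ← Finset.mul_sum, ← Finset.mul_sum,
                ← Finset.sum_div, ← Finset.sum_div, ← hUdef, ← hVdef,
                div_self hU.ne', div_self hV.ne']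
              ring
    _ = U ^ (1 - w) * V ^ w := mul_one _

lemma prod_sum_factor {n m : ℕ} (c d : Fin n → ℝ) (a b : Fin m → ℝ)
    (hc : ∀ j, 0 ≤ c j) (hd : ∀ j, 0 ≤ d j) (ha : ∀ x, 0 ≤ a x) (hb : ∀ x, 0 ≤ b x) (w : ℝ) :
    ∑ z : Fin n × Fin m, (c z.1 * a z.2) ^ (1 - w) * (d z.1 * b z.2) ^ w
      = (∑ j, c j ^ (1 - w) * d j ^ w) * (∑ x, a x ^ (1 - w) * b x ^ w) := by
  rw [Fintype.sum_prod_type, Finset.sum_mul_sum]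
  refine Finset.sum_congr rfl fun j _ => Finset.sum_congr rfl fun x _ => ?_
  rw [Real.mul_rpow (hc j) (ha x), Real.mul_rpow (hd j) (hb x)]
  ring

lemma cont_mix {ι : Type*} [Fintype ι] (P Q : ι → ℝ) (hP : ∀ z, 0 < P z) (hQ : ∀ z, 0 < Q z) :
    Continuous fun w : ℝ => ∑ z, P z ^ (1 - w) * Q z ^ w := by
  refine continuous_finset_sum _ fun z _ => Continuous.mul ?_ ?_
  · exact continuous_iff_continuousAt.2 fun w =>
      (Real.continuousAt_const_rpow (hP z).ne').comp
        ((continuous_const.sub continuous_id).continuousAt)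
  · exact continuous_iff_continuousAt.2 fun w =>
      Real.continuousAt_const_rpow (hQ z).ne' 

end Aux

/-- Theorem 1 of the paper: in the two-node tandem fusion system where the human's
observation (with class-conditional distributions `a, b`) is conditionally
independent of the quantizer output given the class label, if some block merged
by the coarse quantizer is non-proportional (learnability), the Chernoff
information between the joint class-conditional distributions at the fusion node
is strictly larger for the finer `k' = k*ρ`-level quantizer than for the coarser
`k`-level quantizer: `C(P‖Q) < C(P'‖Q')`. -/
theorem tandem_fusion_chernoffInfo_lt
    (k ρ m : ℕ) (hk : 1 ≤ k) (hρ : 2 ≤ ρ) (hm : 1 ≤ m)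
    (p' q' : Fin (k * ρ) → ℝ)
    (hp' : ∀ j, 0 < p' j) (hq' : ∀ j, 0 < q' j)
    (hp'sum : ∑ j, p' j = 1) (hq'sum : ∑ j, q' j = 1)
    (a b : Fin m → ℝ)
    (ha : ∀ x, 0 < a x) (hb : ∀ x, 0 < b x)
    (hasum : ∑ x, a x = 1) (hbsum : ∑ x, b x = 1)
    (p q : Fin k → ℝ)
    (hp : ∀ r, p r = ∑ i : Fin ρ, p' (blockIdx r i))
    (hq : ∀ r, q r = ∑ i : Fin ρ, q' (blockIdx r i))
    (P' Q' : Fin (k * ρ) × Fin m → ℝ)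
    (hP' : ∀ z, P' z = p' z.1 * a z.2) (hQ' : ∀ z, Q' z = q' z.1 * b z.2)
    (P Q : Fin k × Fin m → ℝ)
    (hP : ∀ z, P z = p z.1 * a z.2) (hQ : ∀ z, Q z = q z.1 * b z.2)
    (hlearn : ∃ (r : Fin k) (i j : Fin ρ),
        p' (blockIdx r i) * q' (blockIdx r j) ≠ p' (blockIdx r j) * q' (blockIdx r i)) :
    chernoffInfo P Q < chernoffInfo P' Q' := by
  have hρ0 : 0 < ρ := by omega
  have hkρ0 : 0 < k * ρ := by positivity
  have hP_pos : ∀ z, 0 < P z := fun z => by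
    rw [hP]
    exact mul_pos (by rw [hp]; exact Finset.sum_pos (fun i _ => hp' _) ⟨⟨0, hρ0⟩, Finset.mem_univ _⟩) (ha _)
  have hQ_pos : ∀ z, 0 < Q z := fun z => by
    rw [hQ]
    exact mul_pos (by rw [hq]; exact Finset.sum_pos (fun i _ => hq' _) ⟨⟨0, hρ0⟩, Finset.mem_univ _⟩) (hb _)
  have hp_pos : ∀ r, 0 < p r := fun r => by
    rw [hp]; exact Finset.sum_pos (fun i _ => hp' _) ⟨⟨0, hρ0⟩, Finset.mem_univ _⟩
  have hq_pos : ∀ r, 0 < q r := fun r => by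
    rw [hq]; exact Finset.sum_pos (fun i _ => hq' _) ⟨⟨0, hρ0⟩, Finset.mem_univ _⟩
  have hpsum : ∑ r, p r = 1 := by
    have := sum_blocks (k := k) hρ0 p'
    rw [hp'sum] at this
    calc ∑ r, p r = ∑ r, ∑ i : Fin ρ, p' (blockIdx r i) :=
          Finset.sum_congr rfl fun r _ => hp r
      _ = 1 := this.symm
  have hqsum : ∑ r, q r = 1 := by
    have := sum_blocks (k := k) hρ0 q'
    rw [hq'sum] at this
    calc ∑ r, q r = ∑ r, ∑ i : Fin ρ, q' (blockIdx r i) :=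
          Finset.sum_congr rfl fun r _ => hq r
      _ = 1 := this.symm
  -- abbreviations
  set F : ℝ → ℝ := fun l => ∑ z, P z ^ (1 - l) * Q z ^ l with hF
  set F' : ℝ → ℝ := fun l => ∑ z, P' z ^ (1 - l) * Q' z ^ l with hF'
  have hgpos : ∀ w : ℝ, 0 < ∑ x, a x ^ (1 - w) * b x ^ w := fun w =>
    Finset.sum_pos (fun x _ => mul_pos (Real.rpow_pos_of_pos (ha x) _)
      (Real.rpow_pos_of_pos (hb x) _)) ⟨⟨0, hm⟩, Finset.mem_univ _⟩
  -- factorized forms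
  have hFfac : ∀ w : ℝ, F w = (∑ r, p r ^ (1 - w) * q r ^ w) * (∑ x, a x ^ (1 - w) * b x ^ w) := by
    intro w
    rw [hF]
    simp only [hP, hQ]
    exact prod_sum_factor p q a b (fun r => (hp_pos r).le) (fun r => (hq_pos r).le)
      (fun x => (ha x).le) (fun x => (hb x).le) w
  have hF'fac : ∀ w : ℝ, F' w = (∑ j, p' j ^ (1 - w) * q' j ^ w) * (∑ x, a x ^ (1 - w) * b x ^ w) := by
    intro w
    rw [hF']
    simp only [hP', hQ']
    exact prod_sum_factor p' q' a b (fun j => (hp' j).le) (fun j => (hq' j).le)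
      (fun x => (ha x).le) (fun x => (hb x).le) w
  -- pointwise strict inequality F' < F on (0,1)
  have hFF' : ∀ w ∈ Set.Ioo (0:ℝ) 1, F' w < F w := by
    rintro w ⟨hw0, hw1⟩
    rw [hFfac, hF'fac]
    refine mul_lt_mul_of_pos_right ?_ (hgpos w)
    rw [sum_blocks (k := k) hρ0 (fun j => p' j ^ (1 - w) * q' j ^ w)]
    obtain ⟨r0, hr0⟩ := hlearn
    refine Finset.sum_lt_sum (fun r _ => ?_) ⟨r0, Finset.mem_univ _, ?_⟩
    · rw [hp r, hq r]
      exact block_sum_le hρ0 _ _ (fun i => hp' _) (fun i => hq' _) hw0 hw1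
    · rw [hp r0, hq r0]
      exact block_sum_lt hρ0 _ _ (fun i => hp' _) (fun i => hq' _) hw0 hw1 hr0
  -- F ≤ 1 on (0,1)
  have hFle1 : ∀ w ∈ Set.Ioo (0:ℝ) 1, F w ≤ 1 := by
    rintro w ⟨hw0, hw1⟩
    have h1 : F w ≤ ∑ z, ((1 - w) * P z + w * Q z) :=
      Finset.sum_le_sum fun z _ =>
        amgm_le' (hP_pos z).le (hQ_pos z).le hw0.le hw1.le
    have hPsum : ∑ z, P z = 1 := by
      have : ∑ z : Fin k × Fin m, P z = (∑ r, p r) * (∑ x, a x) := by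
        simp only [hP]
        rw [Fintype.sum_prod_type, Finset.sum_mul_sum]
      rw [this, hpsum, hasum, mul_one]
    have hQsum : ∑ z, Q z = 1 := by
      have : ∑ z : Fin k × Fin m, Q z = (∑ r, q r) * (∑ x, b x) := by
        simp only [hQ]
        rw [Fintype.sum_prod_type, Finset.sum_mul_sum]
      rw [this, hqsum, hbsum, mul_one]
    calc F w ≤ ∑ z, ((1 - w) * P z + w * Q z) := h1
      _ = (1 - w) * (∑ z, P z) + w * (∑ z, Q z) := by
          rw [Finset.sum_add_distrib, Finset.mul_sum, Finset.mul_sum]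
      _ = 1 := by rw [hPsum, hQsum]; ring
  -- positive lower bound for F'
  have hz0 : Fin (k * ρ) × Fin m := ⟨⟨0, hkρ0⟩, ⟨0, hm⟩⟩
  set c : ℝ := min (P' hz0) (Q' hz0) with hc
  have hcpos : 0 < c := lt_min (by rw [hP']; exact mul_pos (hp' _) (ha _))
    (by rw [hQ']; exact mul_pos (hq' _) (hb _))
  have hP'_pos : ∀ z, 0 < P' z := fun z => by rw [hP']; exact mul_pos (hp' _) (ha _)
  have hQ'_pos : ∀ z, 0 < Q' z := fun z => by rw [hQ']; exact mul_pos (hq' _) (hb _)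
  have hF'lb : ∀ w ∈ Set.Ioo (0:ℝ) 1, c ≤ F' w := by
    rintro w ⟨hw0, hw1⟩
    have hterm : c ≤ P' hz0 ^ (1 - w) * Q' hz0 ^ w :=
      min_le_rpow_mix (hP'_pos hz0) (hQ'_pos hz0) hw0.le hw1.le
    refine hterm.trans ?_
    rw [hF']
    exact Finset.single_le_sum (f := fun z => P' z ^ (1 - w) * Q' z ^ w)
      (fun z _ => (mul_pos (Real.rpow_pos_of_pos (hP'_pos z) _)
        (Real.rpow_pos_of_pos (hQ'_pos z) _)).le) (Finset.mem_univ hz0)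
  -- the sets
  set S : Set ℝ := F '' Set.Ioo (0:ℝ) 1 with hS
  set S' : Set ℝ := F' '' Set.Ioo (0:ℝ) 1 with hS'
  have hhalf : (1/2 : ℝ) ∈ Set.Ioo (0:ℝ) 1 := by norm_num
  have hSne : S.Nonempty := ⟨F (1/2), ⟨1/2, hhalf, rfl⟩⟩
  have hS'ne : S'.Nonempty := ⟨F' (1/2), ⟨1/2, hhalf, rfl⟩⟩
  have hS'bdd : BddBelow S' := ⟨c, by rintro y ⟨w, hw, rfl⟩; exact hF'lb w hw⟩
  have hS'inf_pos : 0 < sInf S' :=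
    lt_of_lt_of_le hcpos (le_csInf hS'ne (by rintro y ⟨w, hw, rfl⟩; exact hF'lb w hw))
  -- minimizer of F on [0,1]
  have hcont : Continuous F := by
    rw [hF]; exact cont_mix P Q hP_pos hQ_pos
  obtain ⟨w0, hw0mem, hw0min⟩ := isCompact_Icc.exists_isMinOn
    (Set.nonempty_Icc.2 (zero_le_one)) (hcont.continuousOn (s := Set.Icc (0:ℝ) 1))
  have hSlb : F w0 ≤ sInf S := by
    refine le_csInf hSne ?_
    rintro y ⟨w, hw, rfl⟩
    exact hw0min (Set.mem_Icc.2 ⟨hw.1.le, hw.2.le⟩)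
  have key : sInf S' < sInf S := by
    by_cases hint : w0 ∈ Set.Ioo (0:ℝ) 1
    · have h1 : sInf S' ≤ F' w0 := csInf_le hS'bdd ⟨w0, hint, rfl⟩
      exact lt_of_le_of_lt h1 (lt_of_lt_of_le (hFF' w0 hint) hSlb)
    · -- w0 is 0 or 1, so F w0 = 1
      have hFw0 : F w0 = 1 := by
        rcases Set.mem_Icc.1 hw0mem with ⟨h0, h1⟩
        have : w0 = 0 ∨ w0 = 1 := by
          rcases lt_or_eq_of_le h0 with h | h
          · rcases lt_or_eq_of_le h1 with h' | h'
            · exact absurd ⟨h, h'⟩ hint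
            · exact Or.inr h'
          · exact Or.inl h.symm
        have hPsum : ∑ z, P z = 1 := by
          have heq : ∑ z : Fin k × Fin m, P z = (∑ r, p r) * (∑ x, a x) := by
            simp only [hP]
            rw [Fintype.sum_prod_type, Finset.sum_mul_sum]
          rw [heq, hpsum, hasum, mul_one]
        have hQsum : ∑ z, Q z = 1 := by
          have heq : ∑ z : Fin k × Fin m, Q z = (∑ r, q r) * (∑ x, b x) := by
            simp only [hQ]
            rw [Fintype.sum_prod_type, Finset.sum_mul_sum]
          rw [heq, hqsum, hbsum, mul_one]
        rcases this with h | h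
        · rw [hF]
          simp only [h, sub_zero, Real.rpow_one, Real.rpow_zero, mul_one]
          exact hPsum
        · rw [hF]
          simp only [h, sub_self, Real.rpow_one, Real.rpow_zero, one_mul]
          exact hQsum
      have h1 : sInf S' ≤ F' (1/2) := csInf_le hS'bdd ⟨1/2, hhalf, rfl⟩
      calc sInf S' ≤ F' (1/2) := h1
        _ < F (1/2) := hFF' _ hhalf
        _ ≤ 1 := hFle1 _ hhalf
        _ = F w0 := hFw0.symm
        _ ≤ sInf S := hSlb
  -- conclude
  unfold chernoffInfo
  have hgoal : Real.log (sInf S') < Real.log (sInf S) :=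
    Real.log_lt_log hS'inf_pos key
  have hSS : ((fun l : ℝ => ∑ i, P i ^ (1 - l) * Q i ^ l) '' Set.Ioo (0:ℝ) 1) = S := rfl
  have hSS' : ((fun l : ℝ => ∑ i, P' i ^ (1 - l) * Q' i ^ l) '' Set.Ioo (0:ℝ) 1) = S' := rfl
  rw [hSS, hSS']
  linarith
end
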